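/- arXiv:2501.06883 — 3 statements merged into one kernel-verified Lean document; each statement's English description precedes it below -/
import Mathlib

section
/- Let p be a prime and let f(x) = a_d x^d + a_{d−1} x^{d−1} + ⋯ + a_1 x + a_0 ∈ ℚ[x] be a polynomial of degree d ≥ 1 with a_0 ≠ 0, such that ν_p(a_i) > 0 for every 0 ≤ i < d with a_i ≠ 0, and ν_p(a_d) = 0. Then for every integer n ≥ 1, the number of irreducible factors of the n-th iterate f^n(x) over ℚ, counted with multiplicity, is at most ν_p(a_0); in particular f is eventually stable over ℚ. -/
open Polynomial

/-- The `n`-th compositional iterate of `f`: `f^0 = X`, `f^{n+1} = f ∘ f^n`. -/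
noncomputable def polyIter (f : Polynomial ℚ) : ℕ → Polynomial ℚ
  | 0 => Polynomial.X
  | n + 1 => f.comp (polyIter f n)

/-- The `p`-adic valuation of a rational number, viewed as a rational number. -/
def nuQ (p : ℕ) (x : ℚ) : ℚ := (padicValRat p x : ℚ)

/-- `NP_p(h)` has successive vertices `(xs 0, ys 0), …, (xs t, ys t)`:
the corresponding coefficients are nonzero and have the prescribed valuations,
the slopes are strictly increasing, and every point of the Newton diagram lies
on or above the polygon. -/
def HasNPVertices (p : ℕ) (h : Polynomial ℚ) (t : ℕ) (xs : ℕ → ℕ) (ys : ℕ → ℚ) : Prop :=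
  h.coeff 0 ≠ 0 ∧
  xs 0 = 0 ∧ xs t = h.natDegree ∧
  (∀ s, s < t → xs s < xs (s + 1)) ∧
  (∀ s, s ≤ t → h.coeff (h.natDegree - xs s) ≠ 0 ∧
      nuQ p (h.coeff (h.natDegree - xs s)) = ys s) ∧
  (∀ s, 1 ≤ s → s < t →
      (ys s - ys (s - 1)) / ((xs s : ℚ) - (xs (s - 1) : ℚ)) <
        (ys (s + 1) - ys s) / ((xs (s + 1) : ℚ) - (xs s : ℚ))) ∧
  (∀ s, 1 ≤ s → s ≤ t → ∀ i, h.coeff i ≠ 0 →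
      xs (s - 1) ≤ h.natDegree - i → h.natDegree - i ≤ xs s →
      ys (s - 1) + ((ys s - ys (s - 1)) / ((xs s : ℚ) - (xs (s - 1) : ℚ))) *
          (((h.natDegree - i : ℕ) : ℚ) - (xs (s - 1) : ℚ)) ≤ nuQ p (h.coeff i))

/-- The number of irreducible factors of a polynomial over `ℚ`,
counted with multiplicity. -/
noncomputable def numFactors (P : Polynomial ℚ) : ℕ :=
  (UniqueFactorizationMonoid.factors P).card

/-- `f` is `p^r`-pure. -/
def IsPpure (p r : ℕ) (f : Polynomial ℚ) : Prop :=
  f.coeff 0 ≠ 0 ∧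
  padicValRat p f.leadingCoeff = 0 ∧
  padicValRat p (f.coeff 0) = (r : ℤ) ∧
  ∀ i, 0 < i → i < f.natDegree → f.coeff i ≠ 0 →
    (r : ℚ) / (f.natDegree : ℚ) ≤ nuQ p (f.coeff i) / ((f.natDegree : ℚ) - (i : ℚ))

/-!
Over `ℤ_[p]` the hypotheses say that `f` reduces modulo `p` to `u X^d` with `u ≠ 0`. This shape
is preserved by composition, so every iterate `f^n` reduces to a nonzero constant times
`X^(d^n)`. By Gauss's lemma over the integrally closed ring `ℤ_[p]`, a monic irreducible factor
`g` of `f^n` over `ℚ` has `p`-integral coefficients and divides `f^n` over `ℤ_[p]`, so its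
reduction divides `X^(d^n)` and is a positive power of `X`: its constant term has positive
valuation. As `f^n(0)` is a `p`-adic unit times the product of these constant terms, there are
at most `ν_p(f^n(0))` factors.

For `d ≥ 2` the constant terms of all iterates are associated to `f(0)` in `ℤ_[p]`: if
`x = f(0) w` with `w` a unit, then `f(x) = f(0) (1 + w (divX f)(x))`, and `(divX f)(x) ≡ a_1 ≡ 0`
modulo `p`. For `d = 1` every iterate is linear, hence irreducible.
-/

open UniqueFactorizationMonoid

section GaussLemma

variable {R K S : Type*} [CommRing R] [IsIntegrallyClosed R] [Field K] [Algebra R K]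
  [IsFractionRing R K] [CommRing S] [IsDomain S]

theorem Polynomial.Monic.exists_map_eq_and_map_eq_X_pow_of_dvd {F : R[X]} (hF : F.Monic)
    (φ : R →+* S) {N : ℕ} (hFφ : F.map φ = X ^ N) {g : K[X]} (hg : g.Monic)
    (hdvd : g ∣ F.map (algebraMap R K)) :
    ∃ G : R[X], G.map (algebraMap R K) = g ∧ G.map φ = X ^ g.natDegree := by
  obtain ⟨G, hG⟩ := IsIntegrallyClosed.eq_map_mul_C_of_dvd K hF hdvd
  rw [hg.leadingCoeff, C_1, mul_one] at hG
  have hGm : G.Monic := monic_of_injective (IsFractionRing.injective R K) (hG ▸ hg)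
  have hGF : G ∣ F := hF.dvd_of_fraction_map_dvd_fraction_map hGm (hG ▸ hdvd)
  obtain ⟨k, -, hk⟩ := (dvd_prime_pow prime_X N).mp (hFφ ▸ Polynomial.map_dvd φ hGF)
  have hGk : G.map φ = X ^ k := eq_of_monic_of_associated (hGm.map φ) (monic_X_pow k) hk
  refine ⟨G, hG, ?_⟩
  rw [← hG, natDegree_map_eq_of_injective (IsFractionRing.injective R K),
    ← hGm.natDegree_map φ, hGk, natDegree_X_pow]

end GaussLemma

theorem Polynomial.map_eval_of_map_eq_zero {R S : Type*} [CommSemiring R] [CommSemiring S]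
    (φ : R →+* S) (P : R[X]) {x : R} (hx : φ x = 0) : φ (P.eval x) = φ (P.coeff 0) := by
  rw [← eval₂_hom, hx, eval₂_at_zero]

theorem Polynomial.map_iterate_comp {R S T : Type*} [CommSemiring R] [CommSemiring S]
    [CommSemiring T] {φ : R →+* T} {ψ : S →+* T} {F : R[X]} {G : S[X]}
    (h : F.map φ = G.map ψ) (n : ℕ) : ((F.comp)^[n] X).map φ = ((G.comp)^[n] X).map ψ := by
  induction n with
  | zero => simp
  | succ n ih =>
    rw [Function.iterate_succ_apply', Function.iterate_succ_apply', map_comp, map_comp, h, ih]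

theorem polyIter_eq_iterate_comp (f : ℚ[X]) (n : ℕ) : polyIter f n = (f.comp)^[n] X := by
  induction n with
  | zero => rfl
  | succ n ih => rw [Function.iterate_succ_apply', ← ih]; rfl

theorem natDegree_polyIter (f : ℚ[X]) (n : ℕ) : (polyIter f n).natDegree = f.natDegree ^ n := by
  rw [polyIter_eq_iterate_comp]
  induction n with
  | zero => simp
  | succ n ih => rw [Function.iterate_succ_apply', natDegree_comp, ih, pow_succ']

section ReducesToMonomial

variable {R k : Type*} [CommRing R] [CommRing k] (φ : R →+* k)

def ReducesToMonomial (F : R[X]) : Prop :=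
  ∃ u ≠ 0, F.map φ = C u * X ^ F.natDegree

variable {φ} {F G : R[X]}

theorem reducesToMonomial_iff :
    ReducesToMonomial φ F ↔ φ F.leadingCoeff ≠ 0 ∧ ∀ i ≠ F.natDegree, φ (F.coeff i) = 0 := by
  constructor
  · rintro ⟨u, hu0, hu⟩
    have hcoeff (i : ℕ) := congrArg (coeff · i) hu
    simp only [coeff_map, coeff_C_mul, coeff_X_pow] at hcoeff
    refine ⟨fun h => hu0 ?_, fun i hi => by simpa [hi] using hcoeff i⟩
    have hN := hcoeff F.natDegree
    rw [if_pos rfl, mul_one] at hN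
    exact hN ▸ h
  · rintro ⟨hlc, hcoeff⟩
    refine ⟨_, hlc, ?_⟩
    ext i
    rw [coeff_map, coeff_C_mul, coeff_X_pow]
    split_ifs with hi
    · rw [hi, mul_one, leadingCoeff]
    · rw [mul_zero, hcoeff i hi]

theorem ReducesToMonomial.map_leadingCoeff_ne_zero (hF : ReducesToMonomial φ F) :
    φ F.leadingCoeff ≠ 0 :=
  (reducesToMonomial_iff.mp hF).1

theorem ReducesToMonomial.map_coeff_of_ne (hF : ReducesToMonomial φ F) {i : ℕ}
    (hi : i ≠ F.natDegree) : φ (F.coeff i) = 0 :=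
  (reducesToMonomial_iff.mp hF).2 i hi

theorem ReducesToMonomial.map_eq_X_pow (hF : ReducesToMonomial φ F) (hm : F.Monic) :
    F.map φ = X ^ F.natDegree := by
  ext i
  rcases eq_or_ne i F.natDegree with rfl | hi
  · simp [coeff_map, hm.coeff_natDegree]
  · simp [coeff_map, hF.map_coeff_of_ne hi, coeff_X_pow, hi]

variable [IsDomain R] [IsDomain k]

theorem reducesToMonomial_X : ReducesToMonomial φ X :=
  ⟨1, one_ne_zero, by simp⟩

theorem ReducesToMonomial.C_mul (hF : ReducesToMonomial φ F) {a : R} (ha : φ a ≠ 0) :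
    ReducesToMonomial φ (C a * F) := by
  obtain ⟨u, hu0, hu⟩ := hF
  refine ⟨φ a * u, mul_ne_zero ha hu0, ?_⟩
  rw [natDegree_C_mul (fun h => ha (by rw [h, map_zero])), Polynomial.map_mul, map_C, hu,
    Polynomial.C_mul, mul_assoc]

theorem ReducesToMonomial.comp (hF : ReducesToMonomial φ F) (hG : ReducesToMonomial φ G) :
    ReducesToMonomial φ (F.comp G) := by
  obtain ⟨u, hu0, hu⟩ := hF
  obtain ⟨v, hv0, hv⟩ := hG
  refine ⟨u * v ^ F.natDegree, mul_ne_zero hu0 (pow_ne_zero _ hv0), ?_⟩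
  rw [Polynomial.map_comp, hu, hv, natDegree_comp, mul_comp, C_comp, pow_comp, X_comp, mul_pow,
    ← C_pow, ← pow_mul, Polynomial.C_mul, mul_assoc, mul_comm G.natDegree]

theorem ReducesToMonomial.iterate_comp (hF : ReducesToMonomial φ F) (n : ℕ) :
    ReducesToMonomial φ ((F.comp)^[n] X) := by
  induction n with
  | zero => exact reducesToMonomial_X
  | succ n ih => rw [Function.iterate_succ_apply']; exact hF.comp ih

end ReducesToMonomial

section PadicInt

variable {p : ℕ} [Fact p.Prime] {F : ℤ_[p][X]}

theorem PadicInt.isUnit_iff_toZMod_ne_zero {x : ℤ_[p]} : IsUnit x ↔ toZMod x ≠ 0 := by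
  rw [ne_eq, ← RingHom.mem_ker, ker_toZMod, IsLocalRing.mem_maximalIdeal, mem_nonunits_iff,
    not_not]

theorem PadicInt.norm_eq_of_associated {x y : ℤ_[p]} (h : Associated x y) : ‖x‖ = ‖y‖ := by
  obtain ⟨w, rfl⟩ := h
  rw [norm_mul, PadicInt.norm_units, mul_one]

theorem ReducesToMonomial.associated_eval (hF : ReducesToMonomial PadicInt.toZMod F)
    (hd : 2 ≤ F.natDegree) {x : ℤ_[p]} (hx : Associated (F.coeff 0) x) :
    Associated (F.coeff 0) (F.eval x) := by
  obtain ⟨w, rfl⟩ := hx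
  set x := F.coeff 0 * (w : ℤ_[p])
  have hx0 : PadicInt.toZMod x = 0 := by
    rw [map_mul, hF.map_coeff_of_ne (by omega), zero_mul]
  have hD : PadicInt.toZMod (F.divX.eval x) = 0 := by
    rw [map_eval_of_map_eq_zero _ _ hx0, coeff_divX, hF.map_coeff_of_ne (by omega)]
  have hunit : IsUnit (1 + w * F.divX.eval x) := by
    rw [PadicInt.isUnit_iff_toZMod_ne_zero, map_add, map_mul, hD, mul_zero, add_zero, map_one]
    exact one_ne_zero
  have hFx : F.eval x = F.divX.eval x * x + F.coeff 0 := by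
    conv_lhs => rw [← divX_mul_X_add F]
    simp
  refine ⟨hunit.unit, ?_⟩
  rw [IsUnit.unit_spec, hFx]
  ring

theorem ReducesToMonomial.associated_coeff_zero_iterate
    (hF : ReducesToMonomial PadicInt.toZMod F) (hd : 2 ≤ F.natDegree) (n : ℕ) :
    Associated (F.coeff 0) (((F.comp)^[n + 1] X).coeff 0) := by
  induction n with
  | zero => simp
  | succ n ih =>
    rw [Function.iterate_succ_apply', coeff_zero_eq_eval_zero (F.comp _), eval_comp,
      ← coeff_zero_eq_eval_zero]
    exact hF.associated_eval hd ih

theorem ReducesToMonomial.norm_coeff_zero_lt_one_of_dvd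
    (hF : ReducesToMonomial PadicInt.toZMod F) {g : ℚ_[p][X]} (hg : g.Monic)
    (hdeg : 0 < g.natDegree) (hdvd : g ∣ F.map (algebraMap ℤ_[p] ℚ_[p])) : ‖g.coeff 0‖ < 1 := by
  have hlc : IsUnit F.leadingCoeff :=
    PadicInt.isUnit_iff_toZMod_ne_zero.mpr hF.map_leadingCoeff_ne_zero
  set F' := C (hlc.unit⁻¹ : ℤ_[p]ˣ).val * F
  have hF'm : F'.Monic := by
    rw [Monic, leadingCoeff_C_mul_of_isUnit (Units.isUnit _)]
    exact hlc.val_inv_mul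
  have hF' : ReducesToMonomial PadicInt.toZMod F' :=
    hF.C_mul (PadicInt.isUnit_iff_toZMod_ne_zero.mp (Units.isUnit _))
  have hdvd' : g ∣ F'.map (algebraMap ℤ_[p] ℚ_[p]) := by
    rw [Polynomial.map_mul]
    exact dvd_mul_of_dvd_right hdvd _
  obtain ⟨G, rfl, hG⟩ :=
    hF'm.exists_map_eq_and_map_eq_X_pow_of_dvd _ (hF'.map_eq_X_pow hF'm) hg hdvd'
  have hG0 : PadicInt.toZMod (G.coeff 0) = 0 := by
    simpa [coeff_map, coeff_X_pow, hdeg.ne] using congrArg (coeff · 0) hG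
  rw [coeff_map, PadicInt.algebraMap_apply, ← PadicInt.norm_def, ← PadicInt.not_isUnit_iff,
    PadicInt.isUnit_iff_toZMod_ne_zero, hG0, ne_eq, not_not]

end PadicInt

section PadicValRat

variable {p : ℕ} [Fact p.Prime]

theorem norm_ratCast_eq_zpow {q : ℚ} (hq : q ≠ 0) :
    ‖(q : ℚ_[p])‖ = (p : ℝ) ^ (-padicValRat p q) := by
  rw [Padic.norm_eq_zpow_neg_valuation (by exact_mod_cast hq), Padic.valuation_ratCast]

theorem norm_ratCast_lt_one_iff {q : ℚ} (hq : q ≠ 0) :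
    ‖(q : ℚ_[p])‖ < 1 ↔ 0 < padicValRat p q := by
  rw [norm_ratCast_eq_zpow hq, zpow_lt_one_iff_right₀ (mod_cast (Fact.out : p.Prime).one_lt),
    neg_neg_iff_pos]

theorem padicValRat_eq_of_norm_eq {q r : ℚ} (hq : q ≠ 0) (hr : r ≠ 0)
    (h : ‖(q : ℚ_[p])‖ = ‖(r : ℚ_[p])‖) : padicValRat p q = padicValRat p r := by
  rw [norm_ratCast_eq_zpow hq, norm_ratCast_eq_zpow hr] at h
  exact neg_injective ((zpow_right_strictMono₀ (mod_cast (Fact.out : p.Prime).one_lt)).injective h)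

theorem card_le_padicValRat_prod {s : Multiset ℚ}
    (hs : ∀ q ∈ s, q ≠ 0 ∧ 0 < padicValRat p q) : (s.card : ℤ) ≤ padicValRat p s.prod := by
  induction s using Multiset.induction with
  | empty => simp
  | cons q s ih =>
    obtain ⟨hq0, hq⟩ := hs q (Multiset.mem_cons_self q s)
    have hs' := fun r hr => hs r (Multiset.mem_cons_of_mem hr)
    have hprod : s.prod ≠ 0 := Multiset.prod_ne_zero fun h => (hs' 0 h).1 rfl
    rw [Multiset.prod_cons, padicValRat.mul hq0 hprod, Multiset.card_cons]
    push_cast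
    linarith [ih hs']

end PadicValRat

section PadicLift

variable {p : ℕ} [Fact p.Prime] {P : ℚ[X]} {F : ℤ_[p][X]}

theorem ratCast_coeff_eq_of_map_eq
    (h : F.map (algebraMap ℤ_[p] ℚ_[p]) = P.map (algebraMap ℚ ℚ_[p])) (i : ℕ) :
    (P.coeff i : ℚ_[p]) = F.coeff i := by
  simpa [coeff_map] using (congrArg (coeff · i) h).symm

theorem natDegree_eq_of_map_eq
    (h : F.map (algebraMap ℤ_[p] ℚ_[p]) = P.map (algebraMap ℚ ℚ_[p])) :
    F.natDegree = P.natDegree := by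
  simpa [natDegree_map_eq_of_injective (IsFractionRing.injective ℤ_[p] ℚ_[p])]
    using congrArg natDegree h

theorem ratCast_leadingCoeff_eq_of_map_eq
    (h : F.map (algebraMap ℤ_[p] ℚ_[p]) = P.map (algebraMap ℚ ℚ_[p])) :
    (P.leadingCoeff : ℚ_[p]) = F.leadingCoeff := by
  rw [leadingCoeff, leadingCoeff, natDegree_eq_of_map_eq h, ratCast_coeff_eq_of_map_eq h]

theorem exists_padicInt_lift (hP : P ≠ 0)
    (hlow : ∀ i < P.natDegree, P.coeff i ≠ 0 → 0 < padicValRat p (P.coeff i))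
    (hlc : padicValRat p P.leadingCoeff = 0) :
    ∃ F : ℤ_[p][X], F.map (algebraMap ℤ_[p] ℚ_[p]) = P.map (algebraMap ℚ ℚ_[p]) ∧
      ReducesToMonomial PadicInt.toZMod F := by
  have hval (i : ℕ) : 0 ≤ padicValRat p (P.coeff i) := by
    by_cases h : P.coeff i = 0
    · simp [h]
    rcases (le_natDegree_of_ne_zero h).lt_or_eq with hi | rfl
    · exact (hlow i hi h).le
    · exact hlc.ge
  obtain ⟨F, hF⟩ : P.map (algebraMap ℚ ℚ_[p]) ∈ lifts (algebraMap ℤ_[p] ℚ_[p]) := by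
    refine (lifts_iff_coeff_lifts _).mpr fun i => ⟨⟨(P.coeff i : ℚ_[p]), ?_⟩, ?_⟩
    · rw [Padic.norm_le_one_iff_val_nonneg, Padic.valuation_ratCast]
      exact hval i
    · rw [coeff_map, eq_ratCast]
      rfl
  refine ⟨F, hF, reducesToMonomial_iff.mpr ⟨?_, fun i hi => ?_⟩⟩
  · rw [← PadicInt.isUnit_iff_toZMod_ne_zero, PadicInt.isUnit_iff, PadicInt.norm_def,
      ← ratCast_leadingCoeff_eq_of_map_eq hF, norm_ratCast_eq_zpow (leadingCoeff_ne_zero.mpr hP),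
      hlc, neg_zero, zpow_zero]
  · rw [← not_ne_iff, ← PadicInt.isUnit_iff_toZMod_ne_zero, PadicInt.not_isUnit_iff,
      PadicInt.norm_def, ← ratCast_coeff_eq_of_map_eq hF]
    by_cases h : P.coeff i = 0
    · simp [h]
    rw [natDegree_eq_of_map_eq hF] at hi
    exact (norm_ratCast_lt_one_iff h).mpr (hlow i ((le_natDegree_of_ne_zero h).lt_of_ne hi) h)

end PadicLift

section Counting

variable {p : ℕ} [Fact p.Prime] {F : ℤ_[p][X]}

theorem numFactors_eq_card_normalizedFactors (P : ℚ[X]) :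
    numFactors P = (normalizedFactors P).card := by
  rw [numFactors, normalizedFactors, Multiset.card_map]

theorem numFactors_polyIter_of_natDegree_eq_one {f : ℚ[X]} (hf : f.natDegree = 1) (n : ℕ) :
    numFactors (polyIter f n) = 1 :=
  card_factors_of_irreducible <| irreducible_of_degree_eq_one <|
    (degree_eq_iff_natDegree_eq_of_pos one_pos).mpr (by rw [natDegree_polyIter, hf, one_pow])

theorem numFactors_le_padicValRat_coeff_zero {P : ℚ[X]} (h0 : P.coeff 0 ≠ 0)
    (hFP : F.map (algebraMap ℤ_[p] ℚ_[p]) = P.map (algebraMap ℚ ℚ_[p]))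
    (hF : ReducesToMonomial PadicInt.toZMod F) :
    (numFactors P : ℤ) ≤ padicValRat p (P.coeff 0) := by
  classical
  have hP : P ≠ 0 := by rintro rfl; exact h0 (coeff_zero 0)
  have hlc : padicValRat p P.leadingCoeff = 0 := by
    have hnorm : ‖(P.leadingCoeff : ℚ_[p])‖ = ‖((1 : ℚ) : ℚ_[p])‖ := by
      rw [ratCast_leadingCoeff_eq_of_map_eq hFP, ← PadicInt.norm_def, Rat.cast_one, norm_one,
        ← PadicInt.isUnit_iff, PadicInt.isUnit_iff_toZMod_ne_zero]
      exact hF.map_leadingCoeff_ne_zero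
    rw [padicValRat_eq_of_norm_eq (leadingCoeff_ne_zero.mpr hP) one_ne_zero hnorm,
      padicValRat.one]
  have hfactor : ∀ g ∈ normalizedFactors P, g.coeff 0 ≠ 0 ∧ 0 < padicValRat p (g.coeff 0) := by
    intro g hg
    obtain ⟨hirr, hmonic, hdvd⟩ := (Polynomial.mem_normalizedFactors_iff hP).mp hg
    have hg0 : g.coeff 0 ≠ 0 := by
      have hdvd0 : g.coeff 0 ∣ P.coeff 0 := by simpa using map_dvd constantCoeff hdvd
      exact fun h => h0 (zero_dvd_iff.mp (h ▸ hdvd0))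
    refine ⟨hg0, (norm_ratCast_lt_one_iff hg0).mp ?_⟩
    have hdeg : 0 < (g.map (algebraMap ℚ ℚ_[p])).natDegree := by
      rw [natDegree_map_eq_of_injective (algebraMap ℚ ℚ_[p]).injective]
      exact hirr.natDegree_pos
    have := hF.norm_coeff_zero_lt_one_of_dvd (hmonic.map _) hdeg (hFP ▸ Polynomial.map_dvd _ hdvd)
    rwa [coeff_map, eq_ratCast] at this
  have hconst : P.coeff 0 = P.leadingCoeff * ((normalizedFactors P).map (coeff · 0)).prod := by
    conv_lhs => rw [← leadingCoeff_mul_prod_normalizedFactors P]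
    rw [mul_coeff_zero, coeff_C_zero, coeff_zero_multiset_prod]
  have hprod := card_le_padicValRat_prod (p := p) (s := (normalizedFactors P).map (coeff · 0))
    (by simpa using hfactor)
  rw [hconst, padicValRat.mul (leadingCoeff_ne_zero.mpr hP)
    (Multiset.prod_ne_zero (by simpa using fun g hg h => (hfactor g hg).1 h)), hlc, zero_add,
    numFactors_eq_card_normalizedFactors]
  simpa using hprod

theorem numFactors_polyIter_succ_le {f : ℚ[X]} (ha0 : f.coeff 0 ≠ 0) (hd : 2 ≤ f.natDegree)
    (hFf : F.map (algebraMap ℤ_[p] ℚ_[p]) = f.map (algebraMap ℚ ℚ_[p]))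
    (hF : ReducesToMonomial PadicInt.toZMod F) (n : ℕ) :
    (numFactors (polyIter f (n + 1)) : ℤ) ≤ padicValRat p (f.coeff 0) := by
  have hFn : ((F.comp)^[n + 1] X).map (algebraMap ℤ_[p] ℚ_[p]) =
      (polyIter f (n + 1)).map (algebraMap ℚ ℚ_[p]) := by
    rw [polyIter_eq_iterate_comp]
    exact map_iterate_comp hFf _
  have hnorm : ‖((polyIter f (n + 1)).coeff 0 : ℚ_[p])‖ = ‖(f.coeff 0 : ℚ_[p])‖ := by
    rw [ratCast_coeff_eq_of_map_eq hFn, ratCast_coeff_eq_of_map_eq hFf, ← PadicInt.norm_def,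
      ← PadicInt.norm_def]
    exact (PadicInt.norm_eq_of_associated
      (hF.associated_coeff_zero_iterate ((natDegree_eq_of_map_eq hFf).symm ▸ hd) n)).symm
  have hP0 : (polyIter f (n + 1)).coeff 0 ≠ 0 := by
    intro h
    rw [h, Rat.cast_zero, norm_zero, eq_comm, norm_eq_zero, Rat.cast_eq_zero] at hnorm
    exact ha0 hnorm
  calc (numFactors (polyIter f (n + 1)) : ℤ)
      ≤ padicValRat p ((polyIter f (n + 1)).coeff 0) :=
        numFactors_le_padicValRat_coeff_zero hP0 hFn (hF.iterate_comp _)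
    _ = padicValRat p (f.coeff 0) := padicValRat_eq_of_norm_eq hP0 ha0 hnorm

end Counting

/-- Theorem 1.9: if all non-leading coefficients of `f` have positive `p`-adic
valuation and the leading coefficient is a `p`-adic unit, then every iterate of
`f` has at most `ν_p(a_0)` irreducible factors; in particular `f` is eventually
stable over `ℚ`. -/
theorem eventually_stable_of_positive_valuation
    (p : ℕ) (hp : p.Prime)
    (f : Polynomial ℚ) (d : ℕ) (hfd : f.natDegree = d) (hd1 : 1 ≤ d)
    (ha0 : f.coeff 0 ≠ 0)
    (hlow : ∀ i, i < d → f.coeff i ≠ 0 → 0 < padicValRat p (f.coeff i))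
    (had : padicValRat p (f.coeff d) = 0) :
    (∀ n : ℕ, 1 ≤ n →
      (numFactors (polyIter f n) : ℤ) ≤ padicValRat p (f.coeff 0)) ∧
    ∃ C : ℕ, ∀ n : ℕ, 1 ≤ n → numFactors (polyIter f n) ≤ C := by
  have : Fact p.Prime := ⟨hp⟩
  subst hfd
  have hbound : ∀ n : ℕ, 1 ≤ n →
      (numFactors (polyIter f n) : ℤ) ≤ padicValRat p (f.coeff 0) := by
    intro n hn
    rcases hd1.eq_or_lt with hd | hd
    · rw [numFactors_polyIter_of_natDegree_eq_one hd.symm, Nat.cast_one]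
      exact hlow 0 (by omega) ha0
    · obtain ⟨F, hFf, hF⟩ := exists_padicInt_lift (fun h => ha0 (by simp [h])) hlow had
      obtain ⟨m, rfl⟩ := Nat.exists_eq_add_of_le' hn
      exact numFactors_polyIter_succ_le ha0 hd hFf hF m
  exact ⟨hbound, (padicValRat p (f.coeff 0)).toNat, fun n hn => by
    have := hbound n hn
    omega⟩
end

section
/- Let p be a prime and let g(x) = b_e x^e + b_{e-1} x^{e-1} + ⋯ + b_0 ∈ ℚ[x] have degree e ≥ 1 with b_0 ≠ 0, ν_p(b_e) = 0, and ν_p(b_s) ≥ 1 for every 0 ≤ s ≤ e−1 with b_s ≠ 0. Suppose NP_p(g) has successive vertices (0,0), (e−m_1, ν_p(b_{m_1})), …, (e−m_{t−1}, ν_p(b_{m_{t−1}})), (e, ν_p(b_0)), where e = m_0 > m_1 > ⋯ > m_t = 0. If α is a positive integer such that ν_p(b_0) ≤ (ν_p(b_{m_1})/(e−m_1))·α, then for every 0 ≤ s ≤ t one has ν_p(b_{m_s}) ≤ (ν_p(b_{m_1})/(e−m_1))·(α − m_s). -/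
/-!
The slopes of the Newton polygon increase, and since it starts at `(0, ν_p(b_e)) = (0, 0)` its
first slope is `L = ν_p(b_{m_1}) / (e - m_1)`. Walking from the vertex `(e - m_s, ν_p(b_{m_s}))`
to the last vertex `(e, ν_p(b_0))` therefore gains height at least `L · m_s`, so
`ν_p(b_{m_s}) ≤ ν_p(b_0) - L · m_s ≤ L · (α - m_s)`.
-/

open Polynomial

def segmentSlope {K : Type*} [Field K] (x y : ℕ → K) (j : ℕ) : K :=
  (y (j + 1) - y j) / (x (j + 1) - x j)

theorem mul_sub_le_sub_of_le_segmentSlope {K : Type*} [Field K] [LinearOrder K]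
    [IsStrictOrderedRing K] {x y : ℕ → K} {c : K} {s t : ℕ} (hst : s ≤ t)
    (hx : ∀ j ∈ Finset.Ico s t, x j < x (j + 1))
    (hc : ∀ j ∈ Finset.Ico s t, c ≤ segmentSlope x y j) :
    c * (x t - x s) ≤ y t - y s := by
  rw [← Finset.sum_Ico_sub x hst, ← Finset.sum_Ico_sub y hst, Finset.mul_sum]
  exact Finset.sum_le_sum fun j hj => (le_div_iff₀ (sub_pos.2 (hx j hj))).1 (hc j hj)

namespace HasNPVertices

variable {p : ℕ} {h : ℚ[X]} {t : ℕ} {xs : ℕ → ℕ} {ys : ℕ → ℚ}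

theorem strictMonoOn_segmentSlope (hNP : HasNPVertices p h t xs ys) :
    StrictMonoOn (segmentSlope (fun j => (xs j : ℚ)) ys) (Set.Iio t) :=
  strictMonoOn_of_lt_add_one Set.ordConnected_Iio fun j _ _ hj =>
    hNP.2.2.2.2.2.1 (j + 1) (Nat.le_add_left 1 j) hj

theorem segmentSlope_zero_le (hNP : HasNPVertices p h t xs ys) {j : ℕ} (hj : j < t) :
    segmentSlope (fun j => (xs j : ℚ)) ys 0 ≤ segmentSlope (fun j => (xs j : ℚ)) ys j :=
  hNP.strictMonoOn_segmentSlope.monotoneOn (Nat.zero_lt_of_lt hj) hj (Nat.zero_le j)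

end HasNPVertices

theorem valuation_vertex_bound_general
    (p : ℕ)
    (g : Polynomial ℚ) (e t : ℕ) (m : ℕ → ℕ)
    (hbe : padicValRat p (g.coeff e) = 0)
    (hm0 : m 0 = e) (hmt : m t = 0)
    (hmdec : ∀ s, s < t → m (s + 1) < m s)
    (hNPg : HasNPVertices p g t (fun s => e - m s) (fun s => nuQ p (g.coeff (m s))))
    (α : ℕ)
    (hbound : nuQ p (g.coeff 0) ≤
      nuQ p (g.coeff (m 1)) / ((e : ℚ) - (m 1 : ℚ)) * (α : ℚ)) :
    ∀ s, s ≤ t →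
      nuQ p (g.coeff (m s)) ≤
        nuQ p (g.coeff (m 1)) / ((e : ℚ) - (m 1 : ℚ)) * ((α : ℚ) - (m s : ℚ)) := by
  intro s hs
  set L := nuQ p (g.coeff (m 1)) / ((e : ℚ) - (m 1 : ℚ))
  set x : ℕ → ℚ := fun j => ((e - m j : ℕ) : ℚ)
  set y : ℕ → ℚ := fun j => nuQ p (g.coeff (m j))
  have hm_le : ∀ j ≤ t, m j ≤ e := fun j hj => hm0 ▸
    (strictAntiOn_of_add_one_lt Set.ordConnected_Iic fun j _ _ hj => hmdec j hj).antitoneOn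
      (Set.mem_Iic.2 (Nat.zero_le t)) hj (Nat.zero_le j)
  have hx : ∀ j ≤ t, x j = e - m j := fun j hj => Nat.cast_sub (hm_le j hj)
  have hL : ∀ j < t, L ≤ segmentSlope x y j := fun j hj => by
    have hL0 : segmentSlope x y 0 = L := by
      rw [segmentSlope, hx 1 (Nat.one_le_of_lt hj), hx 0 (Nat.zero_le t)]
      simp [y, L, hm0, nuQ, hbe]
    exact hL0 ▸ hNPg.segmentSlope_zero_le hj
  have key : L * (x t - x s) ≤ y t - y s :=
    mul_sub_le_sub_of_le_segmentSlope hs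
      (fun j hj => Nat.cast_lt.2 (hNPg.2.2.2.1 j (Finset.mem_Ico.1 hj).2))
      (fun j hj => hL j (Finset.mem_Ico.1 hj).2)
  rw [hx t le_rfl, hx s hs, hmt] at key
  simp only [y, hmt, Nat.cast_zero, sub_zero] at key
  linarith

/-- Lemma 2.1. -/
theorem valuation_vertex_bound
    (p : ℕ) (hp : p.Prime)
    (g : Polynomial ℚ) (e t : ℕ) (m : ℕ → ℕ)
    (hge : g.natDegree = e) (he1 : 1 ≤ e)
    (hb0 : g.coeff 0 ≠ 0)
    (hbe : padicValRat p (g.coeff e) = 0)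
    (hbi : ∀ i, i < e → g.coeff i ≠ 0 → 1 ≤ padicValRat p (g.coeff i))
    (hm0 : m 0 = e) (hmt : m t = 0)
    (hmdec : ∀ s, s < t → m (s + 1) < m s)
    (hNPg : HasNPVertices p g t (fun s => e - m s) (fun s => nuQ p (g.coeff (m s))))
    (α : ℕ) (hα : 1 ≤ α)
    (hbound : nuQ p (g.coeff 0) ≤
      nuQ p (g.coeff (m 1)) / ((e : ℚ) - (m 1 : ℚ)) * (α : ℚ)) :
    ∀ s, s ≤ t →
      nuQ p (g.coeff (m s)) ≤
        nuQ p (g.coeff (m 1)) / ((e : ℚ) - (m 1 : ℚ)) * ((α : ℚ) - (m s : ℚ)) :=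
  valuation_vertex_bound_general p g e t m hbe hm0 hmt hmdec hNPg α hbound
end

section
/- Let p be a prime and let g(x) = b_e x^e + ⋯ + b_0 ∈ ℚ[x] have degree e ≥ 1 with b_0 ≠ 0, ν_p(b_e) = 0, and ν_p(b_i) ≥ 1 for every 0 ≤ i ≤ e−1 with b_i ≠ 0; suppose NP_p(g) has successive vertices (0,0), (e−m_1, r_1), …, (e−m_{t−1}, r_{t−1}), (e, r_t), where e = m_0 > m_1 > ⋯ > m_t = 0 and r_i = ν_p(b_{m_i}), with slopes λ_i = (r_i − r_{i−1})/(m_{i−1} − m_i). Let f(x) = A_d x^d + ⋯ + A_0 ∈ ℚ[x] have degree d ≥ 1 with ν_p(A_d) = 0, let λ = min{ ν_p(A_i)/(d−i) : 0 ≤ i < d, A_i ≠ 0 } and assume λ ≥ λ_1, and assume either (i) r_t < λ_1(d+e−1), or (ii) r_t = λ_1(d+e−1) together with (f(0) = 0 or ν_p(f(0)) > dλ or λ > λ_1). Fix n ≥ 0 and suppose NP_p(g ∘ f^n) has successive vertices (0,0), (d^n(e−m_1), r_1), …, (d^n(e−m_{t−1}), r_{t−1}), (d^n e, r_t). Write the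 composition as (g ∘ f^{n+1})(x) = Σ_{k=0}^{d^{n+1}e} C_k x^k. Then for every 0 ≤ s ≤ t, the coefficient C_{d^{n+1} m_s} satisfies ν_p(C_{d^{n+1} m_s}) = r_s. -/
open Polynomial

/-!
Write `h = g ∘ f^n`, so that `g ∘ f^(n+1) = h ∘ f` and, for `j = d^n m_s`, the coefficient of
`x^(d j)` in `h ∘ f` is `∑_b h_b [x^(d j)] f^b`. The terms with `b < j` vanish for degree reasons and
the term `b = j` is `h_j A_d^j`, of valuation `r_s`. For `b > j` the Newton polygon of `h` gives
`ν(h_b) ≥ r_s - σ_s (b - j)`, with `σ_s` the slope of its `s`-th edge, while `ν(A_i) ≥ λ (d - i)`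
gives `ν([x^(d j)] f^b) ≥ λ d (b - j)`. By convexity of the polygon, `r_t ≤ λ₁ (d + e - 1)` bounds
every slope `σ_s` by `λ₁ d ≤ λ d`. Equality forces `s = t`, hence `j = 0`, and then
`[x^0] f^b = f(0)^b` either vanishes or has valuation `> b d λ`. So the term `b = j` is the unique
term of minimal valuation.
-/

section Valuation

variable {p : ℕ} [Fact p.Prime]

lemma nuQ_mul {a b : ℚ} (ha : a ≠ 0) (hb : b ≠ 0) : nuQ p (a * b) = nuQ p a + nuQ p b := by
  simp [nuQ, padicValRat.mul ha hb]

lemma nuQ_pow (a : ℚ) (k : ℕ) : nuQ p (a ^ k) = k * nuQ p a := by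
  simp [nuQ, padicValRat.pow]

lemma min_le_nuQ_add {a b : ℚ} (hab : a + b ≠ 0) : min (nuQ p a) (nuQ p b) ≤ nuQ p (a + b) := by
  simpa [nuQ] using (Int.cast_le (R := ℚ)).mpr (padicValRat.min_le_padicValRat_add (p := p) hab)

lemma le_nuQ_sum {ι : Type*} {s : Finset ι} {F : ι → ℚ} {c : ℚ}
    (hF : ∀ i ∈ s, F i ≠ 0 → c ≤ nuQ p (F i)) (hs : ∑ i ∈ s, F i ≠ 0) :
    c ≤ nuQ p (∑ i ∈ s, F i) := by
  refine Finset.sum_induction F (fun x => x ≠ 0 → c ≤ nuQ p x) (fun a b ha hb hab => ?_)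
    (by simp) hF hs
  rcases eq_or_ne a 0 with rfl | ha0
  · rw [zero_add] at hab ⊢; exact hb hab
  rcases eq_or_ne b 0 with rfl | hb0
  · rw [add_zero] at hab ⊢; exact ha hab
  exact (le_min (ha ha0) (hb hb0)).trans (min_le_nuQ_add hab)

lemma lt_nuQ_sum {ι : Type*} {s : Finset ι} {F : ι → ℚ} {c : ℚ}
    (hF : ∀ i ∈ s, F i ≠ 0 → c < nuQ p (F i)) (hs : ∑ i ∈ s, F i ≠ 0) :
    c < nuQ p (∑ i ∈ s, F i) := by
  refine Finset.sum_induction F (fun x => x ≠ 0 → c < nuQ p x) (fun a b ha hb hab => ?_)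
    (by simp) hF hs
  rcases eq_or_ne a 0 with rfl | ha0
  · rw [zero_add] at hab ⊢; exact hb hab
  rcases eq_or_ne b 0 with rfl | hb0
  · rw [add_zero] at hab ⊢; exact ha hab
  exact (lt_min (ha ha0) (hb hb0)).trans_le (min_le_nuQ_add hab)

lemma nuQ_sum_eq_of_lt {ι : Type*} [DecidableEq ι] {s : Finset ι} {F : ι → ℚ} {a : ι}
    (ha : a ∈ s) (hFa : F a ≠ 0) (hlt : ∀ i ∈ s, i ≠ a → F i ≠ 0 → nuQ p (F a) < nuQ p (F i)) :
    ∑ i ∈ s, F i ≠ 0 ∧ nuQ p (∑ i ∈ s, F i) = nuQ p (F a) := by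
  rw [← Finset.add_sum_erase s F ha]
  set rest := ∑ i ∈ s.erase a, F i
  rcases eq_or_ne rest 0 with hrest | hrest
  · simpa [hrest] using hFa
  have hval : padicValRat p (F a) < padicValRat p rest := by
    have := lt_nuQ_sum (fun i hi => hlt i (Finset.mem_of_mem_erase hi) (Finset.ne_of_mem_erase hi))
      hrest
    simpa [nuQ] using this
  have hsum : F a + rest ≠ 0 := by
    intro h0
    rw [eq_neg_of_add_eq_zero_right h0, padicValRat.neg] at hval
    exact hval.false
  exact ⟨hsum, by simp [nuQ, padicValRat.add_eq_of_lt hsum hFa hrest hval]⟩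

end Valuation

lemma nuQ_nonneg {p : ℕ} {x : ℚ} (hx : x ≠ 0 → 1 ≤ padicValRat p x) : 0 ≤ nuQ p x := by
  rcases eq_or_ne x 0 with rfl | hx0
  · simp [nuQ]
  · simpa [nuQ] using (zero_le_one.trans (hx hx0))

section Coefficients

lemma polyIter_succ' (f : ℚ[X]) (n : ℕ) : polyIter f (n + 1) = (polyIter f n).comp f := by
  induction n with
  | zero => simp [polyIter]
  | succ n ih =>
    show f.comp (polyIter f (n + 1)) = (f.comp (polyIter f n)).comp f
    rw [ih, comp_assoc]

lemma coeff_comp_eq_sum (h f : ℚ[X]) (k : ℕ) :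
    (h.comp f).coeff k = ∑ b ∈ h.support, h.coeff b * (f ^ b).coeff k := by
  simp [comp_eq_sum_left, sum_def, finsetSum_coeff, coeff_C_mul]

variable {p : ℕ} [Fact p.Prime]

lemma le_nuQ_coeff_mul {P Q : ℚ[X]} {a b lam : ℚ}
    (hP : ∀ i, P.coeff i ≠ 0 → lam * (a - i) ≤ nuQ p (P.coeff i))
    (hQ : ∀ i, Q.coeff i ≠ 0 → lam * (b - i) ≤ nuQ p (Q.coeff i))
    (k : ℕ) (hk : (P * Q).coeff k ≠ 0) : lam * (a + b - k) ≤ nuQ p ((P * Q).coeff k) := by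
  rw [coeff_mul] at hk ⊢
  refine le_nuQ_sum (fun x hx hx0 => ?_) hk
  have hPx := hP x.1 (left_ne_zero_of_mul hx0)
  have hQx := hQ x.2 (right_ne_zero_of_mul hx0)
  have hk : (x.1 : ℚ) + x.2 = k := by exact_mod_cast Finset.HasAntidiagonal.mem_antidiagonal.mp hx
  rw [nuQ_mul (left_ne_zero_of_mul hx0) (right_ne_zero_of_mul hx0)]
  linear_combination hPx + hQx + lam * hk

lemma le_nuQ_coeff_pow {f : ℚ[X]} {a lam : ℚ}
    (hf : ∀ i, f.coeff i ≠ 0 → lam * (a - i) ≤ nuQ p (f.coeff i)) (j : ℕ) :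
    ∀ k, (f ^ j).coeff k ≠ 0 → lam * (a * j - k) ≤ nuQ p ((f ^ j).coeff k) := by
  induction j with
  | zero =>
    intro k hk
    obtain rfl : k = 0 := by by_contra hk0; simp [coeff_one, hk0] at hk
    simp [nuQ]
  | succ j ih =>
    intro k hk
    rw [pow_succ] at hk ⊢
    convert le_nuQ_coeff_mul ih hf k hk using 2
    push_cast; ring

lemma nuQ_coeff_comp_natDegree_mul {h f : ℚ[X]} {j : ℕ} (hf : 0 < f.natDegree)
    (hlead : nuQ p f.leadingCoeff = 0) (hj : h.coeff j ≠ 0)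
    (hdom : ∀ b, j < b → h.coeff b ≠ 0 → (f ^ b).coeff (f.natDegree * j) ≠ 0 →
      nuQ p (h.coeff j) < nuQ p (h.coeff b) + nuQ p ((f ^ b).coeff (f.natDegree * j))) :
    (h.comp f).coeff (f.natDegree * j) ≠ 0 ∧
      nuQ p ((h.comp f).coeff (f.natDegree * j)) = nuQ p (h.coeff j) := by
  classical
  have htop : (f ^ j).coeff (f.natDegree * j) = f.leadingCoeff ^ j := by
    rw [mul_comm, coeff_pow_mul_natDegree]
  have hlead0 : f.leadingCoeff ≠ 0 := leadingCoeff_ne_zero.mpr (ne_zero_of_natDegree_gt hf)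
  have hFj : h.coeff j * (f ^ j).coeff (f.natDegree * j) ≠ 0 := by
    rw [htop]; exact mul_ne_zero hj (pow_ne_zero _ hlead0)
  have hvj : nuQ p (h.coeff j * (f ^ j).coeff (f.natDegree * j)) = nuQ p (h.coeff j) := by
    rw [htop, nuQ_mul hj (pow_ne_zero _ hlead0), nuQ_pow, hlead, mul_zero, add_zero]
  rw [coeff_comp_eq_sum, ← hvj]
  refine nuQ_sum_eq_of_lt (mem_support_iff.mpr hj) hFj fun b _ hbj hFb => ?_
  have hhb := left_ne_zero_of_mul hFb
  have hfb := right_ne_zero_of_mul hFb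
  rcases lt_or_gt_of_ne hbj with hlt | hgt
  · refine absurd (coeff_eq_zero_of_natDegree_lt ?_) hfb
    calc (f ^ b).natDegree ≤ b * f.natDegree := natDegree_pow_le
      _ < f.natDegree * j := by rw [mul_comm]; exact Nat.mul_lt_mul_of_pos_left hlt hf
  · rw [hvj, nuQ_mul hhb hfb]
    exact hdom b hgt hhb hfb

lemma lt_nuQ_coeff_pow_natDegree_mul {f : ℚ[X]} {lam L : ℚ} {j b : ℕ}
    (hf : ∀ i, f.coeff i ≠ 0 → lam * (f.natDegree - i) ≤ nuQ p (f.coeff i))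
    (hL : L < lam * f.natDegree ∨ (j = 0 ∧ L = lam * f.natDegree ∧
      (f.eval 0 = 0 ∨ f.natDegree * lam < nuQ p (f.eval 0))))
    (hjb : j < b) (hne : (f ^ b).coeff (f.natDegree * j) ≠ 0) :
    L * (b - j) < nuQ p ((f ^ b).coeff (f.natDegree * j)) := by
  have hbj : (0 : ℚ) < b - j := sub_pos.mpr (by exact_mod_cast hjb)
  rcases hL with hlt | ⟨rfl, rfl, hf0⟩
  · have := le_nuQ_coeff_pow hf b _ hne
    push_cast at this
    nlinarith
  · rw [mul_zero, coeff_zero_eq_eval_zero, eval_pow] at hne ⊢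
    rcases hf0 with hf0 | hf0
    · exact absurd (by rw [hf0, zero_pow (by omega)]) hne
    rw [nuQ_pow]
    push_cast
    nlinarith

end Coefficients

def npSlope (xs : ℕ → ℕ) (ys : ℕ → ℚ) (s : ℕ) : ℚ :=
  (ys s - ys (s - 1)) / ((xs s : ℚ) - (xs (s - 1) : ℚ))

namespace HasNPVertices

variable {p t : ℕ} {h : ℚ[X]} {xs : ℕ → ℕ} {ys : ℕ → ℚ}

lemma xs_strictMonoOn (hh : HasNPVertices p h t xs ys) : StrictMonoOn xs (Set.Iic t) :=
  strictMonoOn_Iic_of_lt_succ fun s hs => hh.2.2.2.1 s hs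

lemma npSlope_strictMonoOn (hh : HasNPVertices p h t xs ys) :
    StrictMonoOn (npSlope xs ys) (Set.Icc 1 t) :=
  strictMonoOn_of_lt_add_one Set.ordConnected_Icc fun s _ hs hs1 =>
    hh.2.2.2.2.2.1 s hs.1 (Nat.lt_of_succ_le hs1.2)

lemma npSlope_le_npSlope (hh : HasNPVertices p h t xs ys) {a b : ℕ} (ha : 1 ≤ a) (hab : a ≤ b)
    (hb : b ≤ t) : npSlope xs ys a ≤ npSlope xs ys b :=
  hh.npSlope_strictMonoOn.monotoneOn ⟨ha, hab.trans hb⟩ ⟨ha.trans hab, hb⟩ hab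

lemma ys_eq_add_npSlope_mul (hh : HasNPVertices p h t xs ys) {s : ℕ} (hs : 1 ≤ s)
    (hst : s ≤ t) : ys s = ys (s - 1) + npSlope xs ys s * ((xs s : ℚ) - xs (s - 1)) := by
  have hx : (xs (s - 1) : ℚ) < xs s := by
    exact_mod_cast hh.xs_strictMonoOn (by simp; omega) (by simpa using hst) (by omega)
  rw [npSlope, div_mul_cancel₀ _ (sub_ne_zero.mpr hx.ne')]
  ring

lemma edge_line_le_ys (hh : HasNPVertices p h t xs ys) {s u : ℕ} (hs : 1 ≤ s) (hst : s ≤ t)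
    (hu : u ≤ t) : ys s + npSlope xs ys s * ((xs u : ℚ) - xs s) ≤ ys u := by
  rcases le_total s u with hsu | hus
  · induction u, hsu using Nat.le_induction with
    | base => simp
    | succ u hsu ih =>
      have hstep := hh.ys_eq_add_npSlope_mul (s := u + 1) (by omega) hu
      have hσ := hh.npSlope_le_npSlope hs (by omega : s ≤ u + 1) hu
      have hx : (xs u : ℚ) ≤ xs (u + 1) := by
        exact_mod_cast (hh.xs_strictMonoOn (by simp; omega) (by simpa using hu) (by omega)).le
      simp only [Nat.add_sub_cancel] at hstep
      nlinarith [ih (by omega)]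
  · induction hus using Nat.decreasingInduction with
    | self => simp
    | of_succ u hus ih =>
      have hstep := hh.ys_eq_add_npSlope_mul (s := u + 1) (by omega) (by omega)
      have hσ := hh.npSlope_le_npSlope (by omega) hus hst
      have hx : (xs u : ℚ) ≤ xs (u + 1) := by
        exact_mod_cast (hh.xs_strictMonoOn (by simp; omega) (by simp; omega) (by omega)).le
      simp only [Nat.add_sub_cancel] at hstep
      nlinarith [ih (by omega)]

lemma exists_edge_mem (hh : HasNPVertices p h t xs ys) (ht : 1 ≤ t) {x : ℕ} (hx : x ≤ xs t) :
    ∃ u, 1 ≤ u ∧ u ≤ t ∧ xs (u - 1) ≤ x ∧ x ≤ xs u := by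
  classical
  have hex : ∃ k, x ≤ xs (k + 1) := ⟨t - 1, by rwa [Nat.sub_add_cancel ht]⟩
  refine ⟨Nat.find hex + 1, by omega, ?_, ?_, Nat.find_spec hex⟩
  · have := Nat.find_min' hex (show x ≤ xs (t - 1 + 1) by rwa [Nat.sub_add_cancel ht])
    omega
  · rcases Nat.eq_zero_or_pos (Nat.find hex) with h0 | hpos
    · simp [h0, hh.2.1]
    · have := Nat.find_min hex (Nat.sub_lt hpos one_pos)
      rw [Nat.sub_add_cancel (show 1 ≤ Nat.find hex from hpos)] at this
      simp only [Nat.add_sub_cancel]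
      omega

lemma edge_line_le_nuQ_coeff (hh : HasNPVertices p h t xs ys) {s i : ℕ} (hs : 1 ≤ s)
    (hst : s ≤ t) (hi : h.coeff i ≠ 0) :
    ys s + npSlope xs ys s * ((h.natDegree : ℚ) - i - xs s) ≤ nuQ p (h.coeff i) := by
  have hiD : i ≤ h.natDegree := le_natDegree_of_ne_zero hi
  obtain ⟨u, hu1, hut, hlo, hhi⟩ :=
    hh.exists_edge_mem (hs.trans hst) (x := h.natDegree - i) (by rw [hh.2.2.1]; omega)
  have hlo' : (xs (u - 1) : ℚ) ≤ h.natDegree - i := by rw [← Nat.cast_sub hiD]; exact_mod_cast hlo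
  have hhi' : (h.natDegree : ℚ) - i ≤ xs u := by rw [← Nat.cast_sub hiD]; exact_mod_cast hhi
  have habove : ys (u - 1) + npSlope xs ys u * ((h.natDegree : ℚ) - i - xs (u - 1)) ≤
      nuQ p (h.coeff i) := by
    have := hh.2.2.2.2.2.2 u hu1 hut i hi hlo hhi
    rwa [Nat.cast_sub hiD] at this
  rcases le_or_gt u s with hus | hsu
  · have hstep := hh.ys_eq_add_npSlope_mul hu1 hut
    have hσ := hh.npSlope_le_npSlope hu1 hus hst
    have hv := hh.edge_line_le_ys hs hst hut
    nlinarith [mul_nonneg (sub_nonneg.mpr hσ) (sub_nonneg.mpr hhi')]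
  · have hσ := hh.npSlope_le_npSlope hs (by omega : s ≤ u) hut
    have hv := hh.edge_line_le_ys hs hst (by omega : u - 1 ≤ t)
    nlinarith [mul_nonneg (sub_nonneg.mpr hσ) (sub_nonneg.mpr hlo')]

end HasNPVertices

section Iterate

variable {p t e D : ℕ} {h : ℚ[X]} {m : ℕ → ℕ} {r : ℕ → ℚ}

lemma npSlope_last_mul_add_le (hh : HasNPVertices p h t (fun s => D * (e - m s)) r)
    (hm0 : m 0 = e) (hmt : m t = 0) (hme : ∀ s, s ≤ t → m s ≤ e)
    (hr0 : r 0 = 0) (hm1 : m 1 < e) (ht : 1 ≤ t) :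
    npSlope (fun s => D * (e - m s)) r t * D * m (t - 1) +
      r 1 / ((e : ℚ) - m 1) * (e - m (t - 1)) ≤ r t := by
  have hx : ∀ u, u ≤ t → ((D * (e - m u) : ℕ) : ℚ) = D * ((e : ℚ) - m u) := fun u hu => by
    push_cast [hme u hu]; ring
  -- convexity: vertex `t - 1` lies above the line through the first edge, of slope `λ₁ / D`
  have hfirst := hh.edge_line_le_ys le_rfl ht (Nat.sub_le t 1)
  have hedge1 := hh.ys_eq_add_npSlope_mul le_rfl ht
  have hlast := hh.ys_eq_add_npSlope_mul ht le_rfl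
  simp only [hx _ (Nat.sub_le t 1), hx 1 ht, Nat.sub_self, hm0, hmt, hr0, Nat.sub_zero,
    mul_zero, Nat.cast_zero, Nat.cast_mul] at hfirst hedge1 hlast
  set σ := npSlope (fun s => D * (e - m s)) r
  have he1 : (e : ℚ) - m 1 ≠ 0 := sub_ne_zero.mpr (by exact_mod_cast hm1.ne')
  rw [div_eq_of_eq_mul he1 (c := σ 1 * D) (by linarith)]
  linarith

lemma npSlope_lt_or_eq_of_iterate {d : ℕ} {lam lam1 : ℚ} {E : Prop}
    (hh : HasNPVertices p h t (fun s => D * (e - m s)) r) (hD : 1 ≤ D) (hd : 1 ≤ d)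
    (hm0 : m 0 = e) (hmt : m t = 0) (hmdec : ∀ s, s < t → m (s + 1) < m s)
    (hme : ∀ s, s ≤ t → m s ≤ e) (hr0 : r 0 = 0) (hr1 : 0 ≤ r 1)
    (hlam1 : lam1 = r 1 / ((e : ℚ) - m 1)) (hlamge : lam1 ≤ lam)
    (hcase : r t < lam1 * (d + e - 1) ∨ (r t = lam1 * (d + e - 1) ∧ (E ∨ lam1 < lam)))
    {s : ℕ} (hs : 1 ≤ s) (hst : s ≤ t) :
    npSlope (fun s => D * (e - m s)) r s < lam * d ∨
      (s = t ∧ npSlope (fun s => D * (e - m s)) r s = lam * d ∧ E) := by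
  have ht : 1 ≤ t := hs.trans hst
  have hm1 : m 1 < e := hm0 ▸ hmdec 0 ht
  have hconv := npSlope_last_mul_add_le hh hm0 hmt hme hr0 hm1 ht
  rw [← hlam1] at hconv
  set σ := npSlope (fun s => D * (e - m s)) r
  have hM : (1 : ℚ) ≤ m (t - 1) := by
    have := hmdec (t - 1) (by omega)
    rw [Nat.sub_add_cancel ht, hmt] at this
    exact_mod_cast this
  have hD' : (1 : ℚ) ≤ D := by exact_mod_cast hD
  have hd' : (1 : ℚ) ≤ d := by exact_mod_cast hd
  have hlam1_nonneg : 0 ≤ lam1 :=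
    hlam1 ▸ div_nonneg hr1 (sub_nonneg.mpr (by exact_mod_cast hm1.le))
  have hlam1d : lam1 * d ≤ lam * d := mul_le_mul_of_nonneg_right hlamge (by positivity)
  have hdM : lam1 * (d - 1 + m (t - 1)) ≤ lam1 * d * m (t - 1) := by
    nlinarith [mul_nonneg hlam1_nonneg (mul_nonneg (sub_nonneg.mpr hd') (sub_nonneg.mpr hM))]
  have hσt : σ t * D ≤ lam1 * d := by
    have hrt : r t ≤ lam1 * (d + e - 1) := hcase.elim le_of_lt fun h => h.1.le
    by_contra!
    nlinarith
  have hσt_lt (hrt : r t < lam1 * (d + e - 1)) : σ t * D < lam1 * d := by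
    by_contra!
    nlinarith
  rcases lt_or_ge (σ s) (lam * d) with hlt | hlt
  · exact Or.inl hlt
  have hst_le : σ s ≤ σ t := hh.npSlope_le_npSlope hs hst le_rfl
  have htD : σ t ≤ σ t * D := le_mul_of_one_le_right (by nlinarith) hD'
  have hseq : s = t := by
    by_contra hne
    have := hh.npSlope_strictMonoOn ⟨hs, hst⟩ ⟨ht, le_rfl⟩ (lt_of_le_of_ne hst hne)
    linarith
  refine Or.inr ⟨hseq, by linarith, ?_⟩
  rcases hcase with hrt | ⟨-, hE | hlam⟩
  · linarith [hσt_lt hrt]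
  · exact hE
  · nlinarith

end Iterate

lemma le_nuQ_coeff_of_mem_lowerBounds {p : ℕ} {f : ℚ[X]} {lam : ℚ}
    (hlead : nuQ p f.leadingCoeff = 0)
    (hlam : lam ∈ lowerBounds {q : ℚ | ∃ i, i < f.natDegree ∧ f.coeff i ≠ 0 ∧
      q = nuQ p (f.coeff i) / ((f.natDegree : ℚ) - (i : ℚ))})
    (i : ℕ) (hi : f.coeff i ≠ 0) : lam * (f.natDegree - i) ≤ nuQ p (f.coeff i) := by
  rcases (le_natDegree_of_ne_zero hi).lt_or_eq with hlt | rfl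
  · have hpos : (0 : ℚ) < f.natDegree - i := sub_pos.mpr (by exact_mod_cast hlt)
    exact (le_div_iff₀ hpos).mp (hlam ⟨i, hlt, hi, rfl⟩)
  · simpa using hlead.ge

theorem valuation_of_vertex_coefficients_of_next_iterate_general
    (p : ℕ) (hp : p.Prime)
    (g f : Polynomial ℚ) (e d t : ℕ) (m : ℕ → ℕ)
    (hbe : padicValRat p (g.coeff e) = 0)
    (hbi : ∀ i, i < e → g.coeff i ≠ 0 → 1 ≤ padicValRat p (g.coeff i))
    (hm0 : m 0 = e) (hmt : m t = 0)
    (hmdec : ∀ s, s < t → m (s + 1) < m s)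
    (hfd : f.natDegree = d) (hd1 : 1 ≤ d)
    (had : padicValRat p (f.coeff d) = 0)
    (lam : ℚ)
    (hlam : IsLeast {q : ℚ | ∃ i, i < d ∧ f.coeff i ≠ 0 ∧
      q = nuQ p (f.coeff i) / ((d : ℚ) - (i : ℚ))} lam)
    (lam1 : ℚ)
    (hlam1 : lam1 = nuQ p (g.coeff (m 1)) / ((e : ℚ) - (m 1 : ℚ)))
    (hlamge : lam1 ≤ lam)
    (hcase :
      nuQ p (g.coeff 0) < lam1 * ((d : ℚ) + (e : ℚ) - 1) ∨
      (nuQ p (g.coeff 0) = lam1 * ((d : ℚ) + (e : ℚ) - 1) ∧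
        (f.eval 0 = 0 ∨ (d : ℚ) * lam < nuQ p (f.eval 0) ∨ lam1 < lam)))
    (n : ℕ)
    (hNPn : HasNPVertices p (g.comp (polyIter f n)) t
      (fun s => d ^ n * (e - m s)) (fun s => nuQ p (g.coeff (m s)))) :
    ∀ s, s ≤ t →
      (g.comp (polyIter f (n + 1))).coeff (d ^ (n + 1) * m s) ≠ 0 ∧
      nuQ p ((g.comp (polyIter f (n + 1))).coeff (d ^ (n + 1) * m s)) =
        nuQ p (g.coeff (m s)) := by
  have := Fact.mk hp
  subst hfd
  intro s hs
  have hme : ∀ s, s ≤ t → m s ≤ e := fun s hs =>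
    hm0 ▸ (strictAntiOn_Iic_of_succ_lt hmdec).antitoneOn (Nat.zero_le t) hs (Nat.zero_le s)
  set h := g.comp (polyIter f n)
  have hdeg : h.natDegree = f.natDegree ^ n * e := by simpa [hmt] using hNPn.2.2.1.symm
  obtain ⟨hj0, hvj⟩ := hNPn.2.2.2.2.1 s hs
  rw [hdeg, ← Nat.mul_sub, Nat.sub_sub_self (hme s hs)] at hj0 hvj
  have hlead : nuQ p f.leadingCoeff = 0 := by rw [nuQ, leadingCoeff, had, Int.cast_zero]
  rw [polyIter_succ', ← comp_assoc, pow_succ', mul_assoc]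
  refine (nuQ_coeff_comp_natDegree_mul (by omega) hlead hj0 fun b hjb hb hfb => ?_).imp_right
    (·.trans hvj)
  rcases Nat.eq_zero_or_pos s with rfl | hs1
  · exact absurd (le_natDegree_of_ne_zero hb) (by rw [hdeg, ← hm0]; omega)
  have hslope := npSlope_lt_or_eq_of_iterate hNPn (Nat.one_le_pow _ _ hd1) hd1 hm0 hmt hmdec hme
    (by simp [hm0, nuQ, hbe]) (nuQ_nonneg (hbi (m 1) (hm0 ▸ hmdec 0 (by omega)))) hlam1 hlamge (by simpa only [hmt, ← or_assoc] using hcase) hs1 hs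
  have hpow := lt_nuQ_coeff_pow_natDegree_mul (le_nuQ_coeff_of_mem_lowerBounds hlead hlam.2)
    (hslope.imp_right fun ⟨hst, hσ, hE⟩ => ⟨by rw [hst, hmt, mul_zero], hσ, hE⟩) hjb hfb
  have hline := hNPn.edge_line_le_nuQ_coeff hs1 hs hb
  push_cast [hdeg, hme s hs] at hline hpow
  linarith

/-- Lemma 2.3. -/
theorem valuation_of_vertex_coefficients_of_next_iterate
    (p : ℕ) (hp : p.Prime)
    (g f : Polynomial ℚ) (e d t : ℕ) (m : ℕ → ℕ)
    (hge : g.natDegree = e) (he1 : 1 ≤ e)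
    (hb0 : g.coeff 0 ≠ 0)
    (hbe : padicValRat p (g.coeff e) = 0)
    (hbi : ∀ i, i < e → g.coeff i ≠ 0 → 1 ≤ padicValRat p (g.coeff i))
    (hm0 : m 0 = e) (hmt : m t = 0)
    (hmdec : ∀ s, s < t → m (s + 1) < m s)
    (hNPg : HasNPVertices p g t (fun s => e - m s) (fun s => nuQ p (g.coeff (m s))))
    (hfd : f.natDegree = d) (hd1 : 1 ≤ d)
    (had : padicValRat p (f.coeff d) = 0)
    (lam : ℚ)
    (hlam : IsLeast {q : ℚ | ∃ i, i < d ∧ f.coeff i ≠ 0 ∧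
      q = nuQ p (f.coeff i) / ((d : ℚ) - (i : ℚ))} lam)
    (lam1 : ℚ)
    (hlam1 : lam1 = nuQ p (g.coeff (m 1)) / ((e : ℚ) - (m 1 : ℚ)))
    (hlamge : lam1 ≤ lam)
    (hcase :
      nuQ p (g.coeff 0) < lam1 * ((d : ℚ) + (e : ℚ) - 1) ∨
      (nuQ p (g.coeff 0) = lam1 * ((d : ℚ) + (e : ℚ) - 1) ∧
        (f.eval 0 = 0 ∨ (d : ℚ) * lam < nuQ p (f.eval 0) ∨ lam1 < lam)))
    (n : ℕ)
    (hNPn : HasNPVertices p (g.comp (polyIter f n)) t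
      (fun s => d ^ n * (e - m s)) (fun s => nuQ p (g.coeff (m s)))) :
    ∀ s, s ≤ t →
      (g.comp (polyIter f (n + 1))).coeff (d ^ (n + 1) * m s) ≠ 0 ∧
      nuQ p ((g.comp (polyIter f (n + 1))).coeff (d ^ (n + 1) * m s)) =
        nuQ p (g.coeff (m s)) :=
  valuation_of_vertex_coefficients_of_next_iterate_general p hp g f e d t m hbe hbi hm0 hmt hmdec
    hfd hd1 had lam hlam lam1 hlam1 hlamge hcase n hNPn
end
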